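/- Let w' be obtained from a nanoword w by the positive elementary move II⁺, i.e. w = xyz and w' = xAByABz where A, B are two new letters with sgn(B) = −sgn(A). Then ⟨XXYY, w'⟩ = ⟨XXYY, w⟩, ⟨XYYX, w'⟩ = ⟨XYYX, w⟩, and ⟨XYXY, w'⟩ = ⟨XYXY, w⟩ − 1; moreover the number of letters increases by 2 and the total sign sum Σ_a sgn(a) is unchanged. -/

import Mathlib

open Finset

/-- The canonical pattern of a word: each position is labelled by the index of the
first occurrence of its letter. Two words are isomorphic iff they have the same pattern. -/
def patternOf {α : Type*} [DecidableEq α] (l : List α) : List ℕ :=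
  l.map (fun a => l.idxOf a)

/-- The sub-word of `w` determined by a set `S` of letters: read, in order, exactly
those values of `w` lying in `S`. -/
def subword {α : Type*} [DecidableEq α] (w : List α) (S : Finset α) : List α :=
  w.filter (fun a => decide (a ∈ S))

/-- The pairing `⟨v, w⟩`: the sum, over all subsets `S` of the alphabet of `w` whose
induced sub-word is isomorphic to the pattern `v`, of `∏_{a ∈ S} sgn a`. -/
def pair {α : Type*} [DecidableEq α] (v : List ℕ) (w : List α) (sgn : α → ℤ) : ℤ :=
  ∑ S ∈ w.toFinset.powerset,
    if patternOf (subword w S) = patternOf v then ∏ a ∈ S, sgn a else 0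

/-!
Split the letter sets of `xAByABz` as `S`, `S ∪ {A}`, `S ∪ {B}`, `S ∪ {A, B}` with `S` a set
of old letters. The sets `S` read the same sub-word as in `xyz`. The sets `S ∪ {A}` and
`S ∪ {B}` read sub-words exchanged by the transposition of `A` and `B`, hence of equal
pattern, with opposite signs, so they cancel. A set `S ∪ {A, B}` reads a word longer
than 4 unless `S = ∅`, so for a pattern of length 4 only `{A, B}` counts: it reads `ABAB`,
of sign `sgn A * sgn B = -1`.
-/

section Pattern

variable {α β : Type*} [DecidableEq α] [DecidableEq β]

lemma List.idxOf_map_of_injective {f : α → β} (hf : Function.Injective f) (a : α)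
    (l : List α) : (l.map f).idxOf (f a) = l.idxOf a := by
  induction l with
  | nil => rfl
  | cons b t ih =>
    by_cases h : b = a
    · subst h; simp [List.idxOf_cons_self]
    · rw [List.map_cons, List.idxOf_cons_ne _ (fun hc => h (hf hc)), List.idxOf_cons_ne _ h, ih]

lemma patternOf_map_of_injective {f : α → β} (hf : Function.Injective f) (l : List α) :
    patternOf (l.map f) = patternOf l := by
  simp only [patternOf, List.map_map]
  exact List.map_congr_left fun a _ => List.idxOf_map_of_injective hf a l

lemma length_patternOf (l : List α) : (patternOf l).length = l.length :=
  List.length_map _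

lemma patternOf_ABAB {A B : α} (hAB : A ≠ B) : patternOf [A, B, A, B] = [0, 1, 0, 1] := by
  simp [patternOf, List.idxOf_cons_ne _ hAB]

end Pattern

section Subword

variable {α : Type*} [DecidableEq α]

lemma subword_append (u v : List α) (S : Finset α) :
    subword (u ++ v) S = subword u S ++ subword v S :=
  List.filter_append _ _

lemma subword_insert_of_notMem {l : List α} {c : α} (hc : c ∉ l) (S : Finset α) :
    subword l (insert c S) = subword l S :=
  List.filter_congr fun a ha => by simp [ne_of_mem_of_not_mem ha hc]

lemma notMem_subword {l : List α} {c : α} (hc : c ∉ l) (S : Finset α) : c ∉ subword l S :=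
  fun h => hc (List.mem_of_mem_filter h)

lemma map_swap_of_notMem {l : List α} {A B : α} (hA : A ∉ l) (hB : B ∉ l) :
    l.map (Equiv.swap A B) = l :=
  (List.map_congr_left fun _ ha => Equiv.swap_apply_of_ne_of_ne
    (ne_of_mem_of_not_mem ha hA) (ne_of_mem_of_not_mem ha hB)).trans (List.map_id l)

lemma subword_empty (l : List α) : subword l ∅ = [] := by
  simp [subword]

end Subword

section MoveII

variable {α : Type*} [DecidableEq α] {x y z : List α} {A B : α}

def moveII (x y z : List α) (A B : α) : List α := x ++ [A, B] ++ y ++ [A, B] ++ z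

lemma toFinset_moveII :
    (moveII x y z A B).toFinset = insert A (insert B (x ++ y ++ z).toFinset) := by
  ext c
  simp only [moveII, List.mem_toFinset, List.mem_append, Finset.mem_insert, List.mem_cons,
    List.not_mem_nil]
  tauto

lemma subword_moveII (S : Finset α) :
    subword (moveII x y z A B) S = subword x S ++ subword [A, B] S ++ subword y S ++
      subword [A, B] S ++ subword z S := by
  simp only [moveII, subword_append]

lemma subword_moveII_of_notMem {S : Finset α} (hAS : A ∉ S) (hBS : B ∉ S) :
    subword (moveII x y z A B) S = subword (x ++ y ++ z) S := by
  have : subword [A, B] S = [] := by simp [subword, hAS, hBS]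
  simp [subword_moveII, subword_append, this]

lemma subword_moveII_insert_left (hA : A ∉ x ++ y ++ z) (hAB : A ≠ B) {S : Finset α}
    (hBS : B ∉ S) :
    subword (moveII x y z A B) (insert A S) =
      subword x S ++ [A] ++ subword y S ++ [A] ++ subword z S := by
  simp only [List.mem_append, not_or] at hA
  have : subword [A, B] (insert A S) = [A] := by simp [subword, hAB.symm, hBS]
  rw [subword_moveII, this, subword_insert_of_notMem hA.1.1, subword_insert_of_notMem hA.1.2,
    subword_insert_of_notMem hA.2]

lemma subword_moveII_insert_right (hB : B ∉ x ++ y ++ z) (hAB : A ≠ B) {S : Finset α}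
    (hAS : A ∉ S) :
    subword (moveII x y z A B) (insert B S) =
      subword x S ++ [B] ++ subword y S ++ [B] ++ subword z S := by
  simp only [List.mem_append, not_or] at hB
  have : subword [A, B] (insert B S) = [B] := by simp [subword, hAB, hAS]
  rw [subword_moveII, this, subword_insert_of_notMem hB.1.1, subword_insert_of_notMem hB.1.2,
    subword_insert_of_notMem hB.2]

lemma subword_moveII_insert_insert (hA : A ∉ x ++ y ++ z) (hB : B ∉ x ++ y ++ z)
    (S : Finset α) :
    subword (moveII x y z A B) (insert A (insert B S)) =
      subword x S ++ [A, B] ++ subword y S ++ [A, B] ++ subword z S := by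
  simp only [List.mem_append, not_or] at hA hB
  have : subword [A, B] (insert A (insert B S)) = [A, B] := by simp [subword]
  rw [subword_moveII, this]
  simp only [subword_insert_of_notMem hA.1.1, subword_insert_of_notMem hA.1.2,
    subword_insert_of_notMem hA.2, subword_insert_of_notMem hB.1.1,
    subword_insert_of_notMem hB.1.2, subword_insert_of_notMem hB.2]

end MoveII

section Pairing

variable {α : Type*} [DecidableEq α]

def pairTerm (v : List ℕ) (w : List α) (sgn : α → ℤ) (S : Finset α) : ℤ :=
  if patternOf (subword w S) = patternOf v then ∏ a ∈ S, sgn a else 0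

lemma pair_eq_sum_pairTerm (v : List ℕ) (w : List α) (sgn : α → ℤ) :
    pair v w sgn = ∑ S ∈ w.toFinset.powerset, pairTerm v w sgn S :=
  rfl

variable {x y z : List α} {A B : α} (v : List ℕ) (sgn : α → ℤ)

lemma pairTerm_moveII_of_notMem {S : Finset α} (hAS : A ∉ S) (hBS : B ∉ S) :
    pairTerm v (moveII x y z A B) sgn S = pairTerm v (x ++ y ++ z) sgn S := by
  rw [pairTerm, pairTerm, subword_moveII_of_notMem hAS hBS]

lemma pairTerm_moveII_insert_add_insert (hA : A ∉ x ++ y ++ z) (hB : B ∉ x ++ y ++ z)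
    (hAB : A ≠ B) (hopp : sgn B = -sgn A) {S : Finset α} (hAS : A ∉ S) (hBS : B ∉ S) :
    pairTerm v (moveII x y z A B) sgn (insert A S)
      + pairTerm v (moveII x y z A B) sgn (insert B S) = 0 := by
  have hswap : (subword (moveII x y z A B) (insert A S)).map (Equiv.swap A B)
      = subword (moveII x y z A B) (insert B S) := by
    rw [subword_moveII_insert_left hA hAB hBS, subword_moveII_insert_right hB hAB hAS]
    simp only [List.mem_append, not_or] at hA hB
    simp only [List.map_append, List.map_cons, List.map_nil, Equiv.swap_apply_left,
      map_swap_of_notMem (notMem_subword hA.1.1 S) (notMem_subword hB.1.1 S),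
      map_swap_of_notMem (notMem_subword hA.1.2 S) (notMem_subword hB.1.2 S),
      map_swap_of_notMem (notMem_subword hA.2 S) (notMem_subword hB.2 S)]
  have hpat := patternOf_map_of_injective (Equiv.swap A B).injective
    (subword (moveII x y z A B) (insert A S))
  rw [hswap] at hpat
  unfold pairTerm
  rw [hpat]
  split_ifs
  · rw [prod_insert hAS, prod_insert hBS, hopp]
    ring
  · rfl

lemma pairTerm_moveII_insert_insert_empty (hA : A ∉ x ++ y ++ z) (hB : B ∉ x ++ y ++ z)
    (hAB : A ≠ B) :
    pairTerm v (moveII x y z A B) sgn (insert A (insert B ∅))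
      = if patternOf v = [0, 1, 0, 1] then sgn A * sgn B else 0 := by
  have hsub : subword (moveII x y z A B) (insert A (insert B ∅)) = [A, B, A, B] := by
    rw [subword_moveII_insert_insert hA hB, subword_empty, subword_empty, subword_empty]
    rfl
  rw [pairTerm, hsub, patternOf_ABAB hAB, prod_insert (by simpa using hAB), insert_empty,
    prod_singleton]
  simp only [eq_comm]

lemma pairTerm_moveII_insert_insert_of_nonempty (hA : A ∉ x ++ y ++ z)
    (hB : B ∉ x ++ y ++ z) (hv : v.length = 4) {S : Finset α}
    (hSw : S ⊆ (x ++ y ++ z).toFinset) (hS : S.Nonempty) :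
    pairTerm v (moveII x y z A B) sgn (insert A (insert B S)) = 0 := by
  obtain ⟨c, hc⟩ := hS
  have hne : subword (x ++ y ++ z) S ≠ [] :=
    List.ne_nil_of_mem (List.mem_filter.2 ⟨List.mem_toFinset.1 (hSw hc), by simpa using hc⟩)
  have hlen : 4 < (subword (moveII x y z A B) (insert A (insert B S))).length := by
    rw [subword_moveII_insert_insert hA hB]
    simp only [subword_append, List.length_append, ← List.length_pos_iff] at hne ⊢
    simp only [List.length_cons, List.length_nil]
    omega
  rw [pairTerm, if_neg]
  intro h
  have := congrArg List.length h
  rw [length_patternOf, length_patternOf, hv] at this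
  omega

theorem pair_moveII (hA : A ∉ x ++ y ++ z) (hB : B ∉ x ++ y ++ z) (hAB : A ≠ B)
    (hopp : sgn B = -sgn A) (hv : v.length = 4) :
    pair v (moveII x y z A B) sgn
      = pair v (x ++ y ++ z) sgn + if patternOf v = [0, 1, 0, 1] then sgn A * sgn B else 0 := by
  set w := x ++ y ++ z
  have hBw : B ∉ w.toFinset := by simpa using hB
  have hAw : A ∉ insert B w.toFinset := by simpa [hAB] using hA
  have hnew : ∀ S ∈ w.toFinset.powerset, A ∉ S ∧ B ∉ S := fun S hS =>
    ⟨fun h => hA (List.mem_toFinset.1 (mem_powerset.1 hS h)),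
      fun h => hB (List.mem_toFinset.1 (mem_powerset.1 hS h))⟩
  have hold : ∑ S ∈ w.toFinset.powerset, pairTerm v (moveII x y z A B) sgn S
      = pair v w sgn :=
    sum_congr rfl fun S hS => pairTerm_moveII_of_notMem v sgn (hnew S hS).1 (hnew S hS).2
  have hcancel : ∑ S ∈ w.toFinset.powerset, pairTerm v (moveII x y z A B) sgn (insert A S)
      + ∑ S ∈ w.toFinset.powerset, pairTerm v (moveII x y z A B) sgn (insert B S) = 0 := by
    rw [← sum_add_distrib]
    exact sum_eq_zero fun S hS =>
      pairTerm_moveII_insert_add_insert v sgn hA hB hAB hopp (hnew S hS).1 (hnew S hS).2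
  have hABAB : ∑ S ∈ w.toFinset.powerset,
      pairTerm v (moveII x y z A B) sgn (insert A (insert B S))
      = if patternOf v = [0, 1, 0, 1] then sgn A * sgn B else 0 := by
    rw [sum_eq_single_of_mem ∅ (empty_mem_powerset _) fun S hS hne =>
      pairTerm_moveII_insert_insert_of_nonempty v sgn hA hB hv (mem_powerset.1 hS)
        (nonempty_iff_ne_empty.2 hne)]
    exact pairTerm_moveII_insert_insert_empty v sgn hA hB hAB
  rw [pair_eq_sum_pairTerm, toFinset_moveII, sum_powerset_insert hAw, sum_powerset_insert hBw,
    sum_powerset_insert hBw, hold, hABAB]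
  linarith

end Pairing

theorem move_II_plus_effect_general {α : Type*} [DecidableEq α]
    (x y z : List α) (A B : α) (sgn : α → ℤ)
    (hsgn : ∀ c, sgn c = 1 ∨ sgn c = -1)
    (hA : A ∉ x ++ y ++ z) (hB : B ∉ x ++ y ++ z) (hAB : A ≠ B)
    (hopp : sgn B = -sgn A) :
    pair [0,0,1,1] (x ++ [A, B] ++ y ++ [A, B] ++ z) sgn
        = pair [0,0,1,1] (x ++ y ++ z) sgn ∧
    pair [0,1,1,0] (x ++ [A, B] ++ y ++ [A, B] ++ z) sgn
        = pair [0,1,1,0] (x ++ y ++ z) sgn ∧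
    pair [0,1,0,1] (x ++ [A, B] ++ y ++ [A, B] ++ z) sgn
        = pair [0,1,0,1] (x ++ y ++ z) sgn - 1 ∧
    (x ++ [A, B] ++ y ++ [A, B] ++ z).toFinset.card
        = (x ++ y ++ z).toFinset.card + 2 ∧
    ∑ c ∈ (x ++ [A, B] ++ y ++ [A, B] ++ z).toFinset, sgn c
        = ∑ c ∈ (x ++ y ++ z).toFinset, sgn c := by
  have hpair (v : List ℕ) (hv : v.length = 4) := pair_moveII v sgn hA hB hAB hopp hv
  have hsgnAB : sgn A * sgn B = -1 := by
    rcases hsgn A with h | h <;> simp [hopp, h]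
  have hBw : B ∉ (x ++ y ++ z).toFinset := by simpa using hB
  have hAw : A ∉ insert B (x ++ y ++ z).toFinset := by simpa [hAB] using hA
  simp only [moveII] at hpair
  refine ⟨?_, ?_, ?_, ?_, ?_⟩
  · simpa [patternOf] using hpair [0, 0, 1, 1] rfl
  · simpa [patternOf] using hpair [0, 1, 1, 0] rfl
  · simpa [patternOf, hsgnAB, sub_eq_add_neg] using hpair [0, 1, 0, 1] rfl
  · rw [← moveII, toFinset_moveII, card_insert_of_notMem hAw, card_insert_of_notMem hBw]
  · rw [← moveII, toFinset_moveII, sum_insert hAw, sum_insert hBw, hopp, add_neg_cancel_left]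

/-- effect of the positive elementary move II⁺, `xyz ↦ xAByABz` with
`A, B` new letters of opposite signs: `⟨XXYY⟩` and `⟨XYYX⟩` are unchanged,
`⟨XYXY⟩` decreases by 1, the number of letters increases by 2, and the total sign
sum is unchanged. -/
theorem move_II_plus_effect {α : Type*} [DecidableEq α]
    (x y z : List α) (A B : α) (sgn : α → ℤ)
    (hGauss : ∀ c ∈ x ++ y ++ z, (x ++ y ++ z).count c = 2)
    (hsgn : ∀ c, sgn c = 1 ∨ sgn c = -1)
    (hA : A ∉ x ++ y ++ z) (hB : B ∉ x ++ y ++ z) (hAB : A ≠ B)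
    (hopp : sgn B = -sgn A) :
    pair [0,0,1,1] (x ++ [A, B] ++ y ++ [A, B] ++ z) sgn
        = pair [0,0,1,1] (x ++ y ++ z) sgn ∧
    pair [0,1,1,0] (x ++ [A, B] ++ y ++ [A, B] ++ z) sgn
        = pair [0,1,1,0] (x ++ y ++ z) sgn ∧
    pair [0,1,0,1] (x ++ [A, B] ++ y ++ [A, B] ++ z) sgn
        = pair [0,1,0,1] (x ++ y ++ z) sgn - 1 ∧
    (x ++ [A, B] ++ y ++ [A, B] ++ z).toFinset.card
        = (x ++ y ++ z).toFinset.card + 2 ∧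
    ∑ c ∈ (x ++ [A, B] ++ y ++ [A, B] ++ z).toFinset, sgn c
        = ∑ c ∈ (x ++ y ++ z).toFinset, sgn c :=
  move_II_plus_effect_general x y z A B sgn hsgn hA hB hAB hopp
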